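/- Let D ∈ P_{n,r} and π ∈ S_n. The weak composition rdes(L_π, ρ_D) ∈ Z^Z is tail-strong: if its entry at position i is positive for some i ≤ 0, then its entry at position j is positive for all i ≤ j ≤ 0. -/

import Mathlib

open Finset MvPolynomial
open scoped Classical

/-- A partial Dyck path in `P_{n,r}`: a lattice path from `(0,r)` to `(n+r,n+r)` with unit
north and east steps staying weakly above `y = x`, encoded by the x-coordinate `x q` of its
north step at height `q` (for `r+1 ≤ q ≤ n+r`). -/
structure PartialDyckPath (n r : ℕ) where
  x : ℕ → ℕ
  mono : ∀ ⦃q q' : ℕ⦄, r + 1 ≤ q → q ≤ q' → q' ≤ n + r → x q ≤ x q'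
  upper : ∀ ⦃q : ℕ⦄, r + 1 ≤ q → q ≤ n + r → x q ≤ q - 1

/-- `{i,j} ∈ E_D` iff `1 ≤ i < j ≤ n` and the square `s(i+r, j+r)` lies below `D`. -/
def PartialDyckPath.Edge {n r : ℕ} (D : PartialDyckPath n r) (i j : ℕ) : Prop :=
  1 ≤ i ∧ i < j ∧ j ≤ n ∧ D.x (j + r) ≤ i + r - 1

/-- `ρ_D(i)`: the largest `j ≤ r` such that the square `s(j, i+r)` lies above `D`. -/
def PartialDyckPath.rho {n r : ℕ} (D : PartialDyckPath n r) (i : ℕ) : ℕ :=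
  min (D.x (i + r)) r

noncomputable def rhoBarAux (ρπ : ℕ → ℤ) (asc : ℕ → Prop) (n : ℕ) : ℕ → ℤ
  | 0 => ρπ n
  | j + 1 =>
    if asc (n - (j + 1)) then min (rhoBarAux ρπ asc n j) (ρπ (n - (j + 1)))
    else min (rhoBarAux ρπ asc n j - 1) (ρπ (n - (j + 1)))

/-- The tightened restriction `ρ̄` in chain coordinates: `rhoBar ρπ asc n i = ρ̄(π(i))`,
where `ρπ i = ρ(π(i))` and `asc i` is the ascent condition at chain position `i`.
It satisfies `ρ̄(π(n)) = ρ(π(n))`, `ρ̄(π(i)) = min (ρ̄(π(i+1))) (ρ(π(i)))` at ascents and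
`ρ̄(π(i)) = min (ρ̄(π(i+1)) - 1) (ρ(π(i)))` at descents. -/
noncomputable def rhoBar (ρπ : ℕ → ℤ) (asc : ℕ → Prop) (n i : ℕ) : ℤ :=
  rhoBarAux ρπ asc n (n - i)

/-- The last chain position of the maximal ascending run starting at position `s`. -/
noncomputable def runEnd (asc : ℕ → Prop) (n s : ℕ) : ℕ :=
  Nat.find (p := fun e => s ≤ e ∧ (n ≤ e ∨ ¬ asc e))
    ⟨max s n, le_max_left _ _, Or.inl (le_max_right _ _)⟩

/-- The reduced weak descent composition: for each run start `s` (i.e. `s = 1` or a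
descent at `s - 1`), place the length of the run starting at `s` in position `ρ̄(π(s))`. -/
noncomputable def rdes (ρπ : ℕ → ℤ) (asc : ℕ → Prop) (n : ℕ) : ℤ →₀ ℕ :=
  ∑ s ∈ (Finset.Icc 1 n).filter (fun s => s = 1 ∨ ¬ asc (s - 1)),
    Finsupp.single (rhoBar ρπ asc n s) (runEnd asc n s - s + 1)

/-- View a permutation of `Fin n` as a permutation of the vertex set `{1,…,n} ⊆ ℕ`. -/
noncomputable def permNat (n : ℕ) (π : Equiv.Perm (Fin n)) : ℕ → ℕ :=
  fun i => if h : 1 ≤ i ∧ i ≤ n then ((π ⟨i - 1, by omega⟩ : Fin n) : ℕ) + 1 else i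

/-- The `P_D`-ascent condition at chain position `k`: `π(k) ≻_{P_D} π(k+1)`, i.e.
`π(k+1) < π(k)` and `{π(k+1), π(k)} ∉ E_D`. -/
noncomputable def ascP {n r : ℕ} (D : PartialDyckPath n r) (π : Equiv.Perm (Fin n)) :
    ℕ → Prop :=
  fun k => permNat n π (k + 1) < permNat n π k ∧
    ¬ D.Edge (permNat n π (k + 1)) (permNat n π k)

/-- `ρ_D` in chain coordinates: `rhoPi D π k = ρ_D(π(k))`. -/
noncomputable def rhoPi {n r : ℕ} (D : PartialDyckPath n r) (π : Equiv.Perm (Fin n)) :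
    ℕ → ℤ :=
  fun k => (D.rho (permNat n π k) : ℤ)

/-- `inv_G(π)`: the number of edges `{π(a), π(b)}` of `G_D` with `a < b` and `π(a) > π(b)`. -/
noncomputable def invG {n r : ℕ} (D : PartialDyckPath n r) (π : Equiv.Perm (Fin n)) : ℕ :=
  (((Finset.Icc 1 n) ×ˢ (Finset.Icc 1 n)).filter fun p : ℕ × ℕ =>
    p.1 < p.2 ∧ permNat n π p.2 < permNat n π p.1 ∧
      D.Edge (permNat n π p.2) (permNat n π p.1)).card

/-
Since `ρ ≥ 0`, a negative value `ρ̄(π(k))` is never attained by the `ρ(π(k))` branch of its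
defining minimum. So along an ascending run a negative `ρ̄` is constant, and at the end of the
run it is one less than `ρ̄` at the start of the next run. Hence every occupied negative
position `p` of `rdes` is followed by the occupied position `p + 1`.
-/

noncomputable def runStarts (asc : ℕ → Prop) (n : ℕ) : Finset ℕ :=
  (Icc 1 n).filter fun s => s = 1 ∨ ¬ asc (s - 1)

section

variable {ρπ : ℕ → ℤ} {asc : ℕ → Prop} {n : ℕ}

lemma rhoBar_of_le {k : ℕ} (h : n ≤ k) : rhoBar ρπ asc n k = ρπ n := by
  rw [rhoBar, Nat.sub_eq_zero_of_le h, rhoBarAux]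

lemma rhoBar_of_lt {k : ℕ} (h : k < n) :
    rhoBar ρπ asc n k =
      if asc k then min (rhoBar ρπ asc n (k + 1)) (ρπ k)
      else min (rhoBar ρπ asc n (k + 1) - 1) (ρπ k) := by
  have hk : n - k = n - (k + 1) + 1 := by omega
  rw [rhoBar, hk, rhoBarAux, ← hk, Nat.sub_sub_self h.le, rhoBar]

lemma rhoBar_of_neg (hρ : ∀ k, 0 ≤ ρπ k) {k : ℕ} (hk : rhoBar ρπ asc n k < 0) :
    k < n ∧ rhoBar ρπ asc n k =
      if asc k then rhoBar ρπ asc n (k + 1) else rhoBar ρπ asc n (k + 1) - 1 := by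
  have hkn : k < n := by
    by_contra! hnk
    rw [rhoBar_of_le hnk] at hk
    exact (hρ n).not_gt hk
  refine ⟨hkn, ?_⟩
  have := hρ k
  rw [rhoBar_of_lt hkn] at hk ⊢
  split_ifs at hk ⊢ <;> omega

lemma le_runEnd (s : ℕ) : s ≤ runEnd asc n s :=
  (Nat.find_spec (p := fun e => s ≤ e ∧ (n ≤ e ∨ ¬ asc e))
    ⟨max s n, le_max_left _ _, Or.inl (le_max_right _ _)⟩).1

lemma runEnd_stops (s : ℕ) : n ≤ runEnd asc n s ∨ ¬ asc (runEnd asc n s) :=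
  (Nat.find_spec (p := fun e => s ≤ e ∧ (n ≤ e ∨ ¬ asc e))
    ⟨max s n, le_max_left _ _, Or.inl (le_max_right _ _)⟩).2

lemma asc_of_lt_runEnd {s k : ℕ} (hsk : s ≤ k) (hk : k < runEnd asc n s) : k < n ∧ asc k := by
  have := Nat.find_min (p := fun e => s ≤ e ∧ (n ≤ e ∨ ¬ asc e)) _ hk
  push Not at this
  exact this hsk

lemma mem_runStarts_succ_runEnd (s : ℕ) (hs : runEnd asc n s < n) :
    runEnd asc n s + 1 ∈ runStarts asc n := by
  have hstop : ¬ asc (runEnd asc n s) := (runEnd_stops s).resolve_left hs.not_ge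
  exact mem_filter.2 ⟨mem_Icc.2 ⟨by omega, by omega⟩, Or.inr (by simpa using hstop)⟩

lemma rhoBar_eq_rhoBar_succ_runEnd_sub_one (hρ : ∀ k, 0 ≤ ρπ k) {s k : ℕ} (hsk : s ≤ k)
    (hke : k ≤ runEnd asc n s) (hk : rhoBar ρπ asc n k < 0) :
    runEnd asc n s < n ∧
      rhoBar ρπ asc n k = rhoBar ρπ asc n (runEnd asc n s + 1) - 1 := by
  induction hke using Nat.decreasingInduction with
  | of_succ k hk' ih =>
    obtain ⟨-, hasc⟩ := asc_of_lt_runEnd hsk hk'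
    obtain ⟨-, hstep⟩ := rhoBar_of_neg hρ hk
    rw [if_pos hasc] at hstep
    rw [hstep] at hk ⊢
    exact ih (by omega) hk
  | self =>
    obtain ⟨hkn, hstep⟩ := rhoBar_of_neg hρ hk
    rw [if_neg ((runEnd_stops s).resolve_left hkn.not_ge)] at hstep
    exact ⟨hkn, hstep⟩

lemma exists_mem_runStarts_rhoBar_eq_add_one (hρ : ∀ k, 0 ≤ ρπ k) {s : ℕ}
    (hs : rhoBar ρπ asc n s < 0) :
    ∃ t ∈ runStarts asc n, rhoBar ρπ asc n t = rhoBar ρπ asc n s + 1 := by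
  obtain ⟨hen, heq⟩ := rhoBar_eq_rhoBar_succ_runEnd_sub_one hρ le_rfl (le_runEnd s) hs
  exact ⟨_, mem_runStarts_succ_runEnd s hen, by omega⟩

lemma rdes_pos_iff {p : ℤ} :
    0 < rdes ρπ asc n p ↔ ∃ s ∈ runStarts asc n, rhoBar ρπ asc n s = p := by
  simp only [rdes, runStarts, Finsupp.finsetSum_apply, Finset.sum_pos_iff, Finsupp.single_apply]
  refine exists_congr fun s => and_congr_right fun _ => ?_
  split_ifs with hs <;> simp [hs]

lemma rdes_pos_of_le (hρ : ∀ k, 0 ≤ ρπ k) {i : ℤ} (h : 0 < rdes ρπ asc n i) {j : ℤ}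
    (hij : i ≤ j) (hj : j ≤ 0) : 0 < rdes ρπ asc n j := by
  induction j, hij using Int.leInduction with
  | base => exact h
  | succ j _ ih =>
    obtain ⟨s, -, hs⟩ := rdes_pos_iff.mp (ih (by omega))
    rw [rdes_pos_iff, ← hs]
    exact exists_mem_runStarts_rhoBar_eq_add_one hρ (by omega)

end

theorem rdes_tail_strong_general {n r : ℕ} (D : PartialDyckPath n r) (π : Equiv.Perm (Fin n))
    (i : ℤ) (h : 0 < rdes (rhoPi D π) (ascP D π) n i)
    (j : ℤ) (hij : i ≤ j) (hj : j ≤ 0) :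
    0 < rdes (rhoPi D π) (ascP D π) n j :=
  rdes_pos_of_le (fun _ => Int.natCast_nonneg _) h hij hj

/-- The weak composition `rdes(L_π, ρ_D)` is tail-strong: a positive
entry at a nonpositive position forces all entries between it and position `0` to be
positive. -/
theorem rdes_tail_strong {n r : ℕ} (D : PartialDyckPath n r) (π : Equiv.Perm (Fin n))
    (i : ℤ) (hi : i ≤ 0) (h : 0 < rdes (rhoPi D π) (ascP D π) n i)
    (j : ℤ) (hij : i ≤ j) (hj : j ≤ 0) :
    0 < rdes (rhoPi D π) (ascP D π) n j :=
  rdes_tail_strong_general D π i h j hij hj
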